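/- arXiv:2504.15727 — 2 statements merged into one kernel-verified Lean document; each statement's English description precedes it below -/
import Mathlib

section
/- Let A be a nonempty proper subset of a set D, let a ∈ A, let ⊣ be the operation on D given by x ⊣ y = x if x ∈ A and x ⊣ y = a if x ∉ A, and let ⊢ be the dual operation x ⊢ y = y ⊣ x. Then (D,⊣,⊢) is an abelian dimonoid with empty halo (it has no bar-units), every bijection f : D → D with f(A) = A and f(a) = a is an automorphism of (D,⊣,⊢) and conversely; moreover, if |A| > 1 then (D,⊣,⊢) is not commutative. -/
/-!
Both operations forget one argument: `x ⊣ y = r x` and `x ⊢ y = r y`, where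
`r = collapseTo A a` is the retraction of `D` onto `A` collapsing the complement to `a`.
Any idempotent `r` makes such a pair of operations a dimonoid; a bar-unit would force
`r = id`; a permutation preserves the operations exactly when it commutes with `r`, i.e. when
it fixes `A` setwise and `a`; and two distinct points of `A` are fixed by `r`, so `⊣` is not
commutative.
-/

/-- A dimonoid: two associative operations `ld` (⊣) and `rd` (⊢) satisfying
axioms (D1), (D2), (D3). -/
def IsDimonoid {D : Type*} (ld rd : D → D → D) : Prop :=
  (∀ x y z, ld (ld x y) z = ld x (ld y z)) ∧
  (∀ x y z, rd (rd x y) z = rd x (rd y z)) ∧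
  (∀ x y z, ld (ld x y) z = ld x (rd y z)) ∧
  (∀ x y z, ld (rd x y) z = rd x (ld y z)) ∧
  (∀ x y z, rd (ld x y) z = rd x (rd y z))

/-- The automorphism group of a magma `(D, op)`, as a subgroup of `Equiv.Perm D`. -/
def semigroupAutGroup {D : Type*} (op : D → D → D) : Subgroup (Equiv.Perm D) where
  carrier := {f : Equiv.Perm D | ∀ x y, f (op x y) = op (f x) (f y)}
  one_mem' := fun _ _ => rfl
  mul_mem' := by
    intro f g hf hg
    simp only [Set.mem_setOf_eq] at hf hg ⊢
    intro x y
    simp [Equiv.Perm.mul_apply, hg, hf]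
  inv_mem' := by
    intro f hf
    simp only [Set.mem_setOf_eq] at hf ⊢
    intro x y
    apply f.injective
    rw [hf]; simp

/-- The automorphism group of a dimonoid `(D, ld, rd)`. -/
def dimonoidAutGroup {D : Type*} (ld rd : D → D → D) : Subgroup (Equiv.Perm D) :=
  semigroupAutGroup ld ⊓ semigroupAutGroup rd

theorem IsDimonoid.of_idempotent {D : Type*} {r : D → D} (hr : ∀ x, r (r x) = r x) :
    IsDimonoid (fun x _ => r x) (fun _ y => r y) :=
  ⟨fun x _ _ => hr x, fun _ _ z => (hr z).symm, fun x _ _ => hr x, fun _ _ _ => rfl,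
    fun _ _ z => (hr z).symm⟩

namespace Set

variable {D : Type*} {A : Set D} {a : D}

open Classical in
noncomputable def collapseTo (A : Set D) (a : D) (x : D) : D := if x ∈ A then x else a

theorem collapseTo_of_mem {x : D} (hx : x ∈ A) : collapseTo A a x = x := if_pos hx

theorem collapseTo_of_notMem {x : D} (hx : x ∉ A) : collapseTo A a x = a := if_neg hx

theorem collapseTo_mem (ha : a ∈ A) (x : D) : collapseTo A a x ∈ A := by
  by_cases hx : x ∈ A
  · rwa [collapseTo_of_mem hx]
  · rwa [collapseTo_of_notMem hx]

theorem collapseTo_idem (ha : a ∈ A) (x : D) :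
    collapseTo A a (collapseTo A a x) = collapseTo A a x :=
  collapseTo_of_mem (collapseTo_mem ha x)

theorem collapseTo_ne_id (ha : a ∈ A) (hA : A ≠ univ) : collapseTo A a ≠ id := by
  intro h
  obtain ⟨d, hd⟩ := (ne_univ_iff_exists_notMem A).1 hA
  have hda : a = d := (collapseTo_of_notMem hd).symm.trans (congrFun h d)
  exact hd (hda ▸ ha)

theorem commute_collapseTo_iff (ha : a ∈ A) (hA : A ≠ univ) (f : Equiv.Perm D) :
    (∀ x, f (collapseTo A a x) = collapseTo A a (f x)) ↔ f '' A = A ∧ f a = a := by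
  constructor
  · intro hf
    have hmem : ∀ x, f x ∈ A ↔ x ∈ A := by
      intro x
      constructor
      · intro hfx
        by_contra hx
        -- otherwise `f a = f (collapseTo x) = collapseTo (f x) = f x`, so `x = a ∈ A`
        have hax : f a = f x := by
          simpa only [collapseTo_of_notMem hx, collapseTo_of_mem hfx] using hf x
        exact hx (f.injective hax ▸ ha)
      · intro hx
        have hfx : f x = collapseTo A a (f x) := by simpa only [collapseTo_of_mem hx] using hf x
        rw [hfx]
        exact collapseTo_mem ha (f x)
    obtain ⟨d, hd⟩ := (ne_univ_iff_exists_notMem A).1 hA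
    refine ⟨((Equiv.preimage_eq_iff_eq_image f A A).1 (ext hmem)).symm, ?_⟩
    simpa only [collapseTo_of_notMem hd, collapseTo_of_notMem ((hmem d).not.2 hd)] using hf d
  · rintro ⟨hfA, hfa⟩ x
    have hmem : f x ∈ A ↔ x ∈ A := by
      conv_lhs => rw [← hfA]
      exact f.injective.mem_set_image
    by_cases hx : x ∈ A
    · rw [collapseTo_of_mem hx, collapseTo_of_mem (hmem.2 hx)]
    · rw [collapseTo_of_notMem hx, collapseTo_of_notMem (hmem.not.2 hx), hfa]

end Set

open Set in
theorem LO_A_D_dimonoid_general {D : Type*} (A : Set D) (hAp : A ≠ Set.univ)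
    (a : D) (ha : a ∈ A) (ld rd : D → D → D)
    (hld1 : ∀ x y, x ∈ A → ld x y = x)
    (hld2 : ∀ x y, x ∉ A → ld x y = a)
    (hrd : ∀ x y, rd x y = ld y x) :
    IsDimonoid ld rd ∧
    (∀ x y, ld x y = rd y x) ∧
    (¬ ∃ e : D, ∀ d, rd e d = d ∧ ld d e = d) ∧
    (∀ f : Equiv.Perm D,
      ((∀ x y, f (ld x y) = ld (f x) (f y)) ∧ (∀ x y, f (rd x y) = rd (f x) (f y))) ↔
      (⇑f '' A = A ∧ f a = a)) ∧
    (A.Nontrivial → ¬ ((∀ x y, ld x y = ld y x) ∧ (∀ x y, rd x y = rd y x))) := by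
  obtain rfl : ld = fun x _ => collapseTo A a x := by
    funext x y
    by_cases hx : x ∈ A
    · rw [hld1 x y hx, collapseTo_of_mem hx]
    · rw [hld2 x y hx, collapseTo_of_notMem hx]
  obtain rfl : rd = fun _ y => collapseTo A a y := funext₂ hrd
  refine ⟨IsDimonoid.of_idempotent (collapseTo_idem ha), fun _ _ => rfl, ?_, fun f => ?_, ?_⟩
  · rintro ⟨e, he⟩
    exact collapseTo_ne_id ha hAp (funext fun d => (he d).2)
  · rw [← commute_collapseTo_iff ha hAp]
    exact ⟨fun h x => h.1 x x, fun h => ⟨fun x _ => h x, fun _ y => h y⟩⟩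
  · rintro ⟨b, hb, c, hc, hbc⟩ ⟨hcomm, -⟩
    have hbc' : collapseTo A a b = collapseTo A a c := hcomm b c
    rw [collapseTo_of_mem hb, collapseTo_of_mem hc] at hbc'
    exact hbc hbc'

/-- The dimonoid `LO_{A←D} ⋈ RO_{A←D}` is an abelian dimonoid with empty halo;
its automorphisms are exactly the bijections `f` with `f(A) = A` and `f(a) = a`;
and if `|A| > 1` it is not commutative. -/
theorem LO_A_D_dimonoid {D : Type*} (A : Set D) (hA : A.Nonempty) (hAp : A ≠ Set.univ)
    (a : D) (ha : a ∈ A) (ld rd : D → D → D)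
    (hld1 : ∀ x y, x ∈ A → ld x y = x)
    (hld2 : ∀ x y, x ∉ A → ld x y = a)
    (hrd : ∀ x y, rd x y = ld y x) :
    IsDimonoid ld rd ∧
    (∀ x y, ld x y = rd y x) ∧
    (¬ ∃ e : D, ∀ d, rd e d = d ∧ ld d e = d) ∧
    (∀ f : Equiv.Perm D,
      ((∀ x y, f (ld x y) = ld (f x) (f y)) ∧ (∀ x y, f (rd x y) = rd (f x) (f y))) ↔
      (⇑f '' A = A ∧ f a = a)) ∧
    (A.Nontrivial → ¬ ((∀ x y, ld x y = ld y x) ∧ (∀ x y, rd x y = rd y x))) :=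
  LO_A_D_dimonoid_general A hAp a ha ld rd hld1 hld2 hrd
end

section
/- Let A be a subset of a set D with 0 ∈ A ⊆ D. Define ⊣ on D by x ⊣ y = x if x ∈ A and x ⊣ y = 0 if x ∉ A, and let ⊢ be the null operation x ⊢ y = 0. Then (D,⊣,⊢) is a rectangular dimonoid (both ⊣ and ⊢ are rectangular semigroup operations and the dimonoid axioms hold); a bijection f : D → D is an automorphism of (D,⊣,⊢) if and only if f(A) = A and f(0) = 0 (so its automorphism group is isomorphic to S_{A∖{0}} × S_{D∖A}); if |D| > 2 the halo of (D,⊣,⊢) is empty; and if |A| > 1 then (D,⊣,⊢) is nonabelian and noncommutative. -/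
/-!
Since `z ∈ A`, the operation `x ⊣ y` is `r x` for the retraction `r = A.collapseCompl z` of `D`
onto `A` that collapses `Aᶜ` to `z`, and `x ⊢ y = z`; every dimonoid law then reduces to
`r ∘ r = r` and `r z = z`.
A permutation commutes with `r` and fixes `z` exactly when it preserves `A` and fixes `z`, and such
a permutation is the product of its independent restrictions to `A \ {z}` and `Aᶜ`.
-/

open Equiv MulAction Pointwise

theorem Set.mem_diff_singleton_union_compl_iff {α : Type*} {A : Set α} {z : α} (hz : z ∈ A)
    (x : α) : x ∈ A \ {z} ∪ Aᶜ ↔ x ≠ z := by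
  constructor
  · rintro (⟨-, hxz⟩ | hxA) rfl
    exacts [hxz rfl, hxA hz]
  · exact fun hxz => (em (x ∈ A)).imp (fun hxA => ⟨hxA, hxz⟩) id

namespace Equiv.Perm

variable {α : Type*}

section Disjoint

variable {B C : Set α}

theorem ofSubtype_apply_mem_iff_mem_of_disjoint [DecidablePred (· ∈ B)]
    (hBC : _root_.Disjoint B C) (σ : Perm B) (x : α) : ofSubtype σ x ∈ C ↔ x ∈ C := by
  by_cases hx : x ∈ B
  · rw [ofSubtype_apply_of_mem σ hx]
    exact iff_of_false (Set.disjoint_left.1 hBC (σ ⟨x, hx⟩).2) (Set.disjoint_left.1 hBC hx)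
  · rw [ofSubtype_apply_of_not_mem σ hx]

variable [DecidablePred (· ∈ B)] [DecidablePred (· ∈ C)]

theorem ofSubtype_subtypePerm_mul_ofSubtype_subtypePerm (hBC : _root_.Disjoint B C) {f : Perm α}
    (hB : ∀ x, f x ∈ B ↔ x ∈ B) (hC : ∀ x, f x ∈ C ↔ x ∈ C) (hf : ∀ x, f x ≠ x → x ∈ B ∪ C) :
    ofSubtype (f.subtypePerm hB) * ofSubtype (f.subtypePerm hC) = f := by
  ext x
  rw [mul_apply]
  by_cases hxC : x ∈ C
  · rw [ofSubtype_subtypePerm_of_mem hC hxC,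
      ofSubtype_subtypePerm_of_not_mem hB (Set.disjoint_right.1 hBC ((hC x).2 hxC))]
  · rw [ofSubtype_subtypePerm_of_not_mem hC hxC]
    by_cases hxB : x ∈ B
    · rw [ofSubtype_subtypePerm_of_mem hB hxB]
    · rw [ofSubtype_subtypePerm_of_not_mem hB hxB]
      by_contra hfx
      exact (hf x (Ne.symm hfx)).elim hxB hxC

theorem subtypePerm_ofSubtype_mul_ofSubtype_left (hBC : _root_.Disjoint B C)
    (σ : Perm B) (τ : Perm C) :
    (ofSubtype σ * ofSubtype τ).subtypePerm (fun x => (ofSubtype_apply_mem_iff_mem σ _).trans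
      (ofSubtype_apply_mem_iff_mem_of_disjoint hBC.symm τ x)) = σ := by
  ext ⟨x, hx⟩
  change ofSubtype σ (ofSubtype τ x) = σ ⟨x, hx⟩
  rw [ofSubtype_apply_of_not_mem τ (Set.disjoint_left.1 hBC hx), ofSubtype_apply_of_mem σ hx]

theorem subtypePerm_ofSubtype_mul_ofSubtype_right (hBC : _root_.Disjoint B C)
    (σ : Perm B) (τ : Perm C) :
    (ofSubtype σ * ofSubtype τ).subtypePerm
      (fun x => (ofSubtype_apply_mem_iff_mem_of_disjoint hBC σ _).trans
        (ofSubtype_apply_mem_iff_mem τ x)) = τ := by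
  ext ⟨x, hx⟩
  change ofSubtype σ (ofSubtype τ x) = τ ⟨x, hx⟩
  rw [ofSubtype_apply_of_mem τ hx,
    ofSubtype_apply_of_not_mem σ (Set.disjoint_right.1 hBC (τ ⟨x, hx⟩).2)]

end Disjoint

theorem image_eq_self_iff (f : Perm α) (A : Set α) : ⇑f '' A = A ↔ ∀ x, f x ∈ A ↔ x ∈ A := by
  refine ⟨fun h x => by simpa only [h] using f.injective.mem_set_image (s := A) (a := x),
    fun h => Set.ext fun y => ?_⟩
  rw [← f.apply_symm_apply y, f.injective.mem_set_image, h]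

section Stabilizer

variable {A : Set α} {z : α}

theorem apply_mem_iff_of_mem_stabilizer {f : Perm α} (hf : f ∈ stabilizer (Perm α) A) (x : α) :
    f x ∈ A ↔ x ∈ A :=
  (f.image_eq_self_iff A).1 hf x

theorem apply_mem_diff_singleton_iff {f : Perm α} (hA : ∀ x, f x ∈ A ↔ x ∈ A) (hfz : f z = z)
    (x : α) : f x ∈ A \ {z} ↔ x ∈ A \ {z} := by
  simp only [Set.mem_sdiff, Set.mem_singleton_iff, hA, f.injective.eq_iff' hfz]

theorem ofSubtype_mul_ofSubtype_mem_stabilizer_inf_stabilizer [DecidablePred (· ∈ A \ {z})]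
    [DecidablePred (· ∈ Aᶜ)] (hz : z ∈ A) (σ : Perm ↥(A \ {z})) (τ : Perm ↥Aᶜ) :
    ofSubtype σ * ofSubtype τ ∈ stabilizer (Perm α) A ⊓ stabilizer (Perm α) z := by
  refine ⟨((ofSubtype σ * ofSubtype τ).image_eq_self_iff A).2 fun x => not_iff_not.1 ?_, ?_⟩
  · exact (ofSubtype_apply_mem_iff_mem_of_disjoint
      (disjoint_compl_right.mono_left Set.sdiff_subset) σ _).trans (ofSubtype_apply_mem_iff_mem τ x)
  · change ofSubtype σ (ofSubtype τ z) = z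
    rw [ofSubtype_apply_of_not_mem τ (not_not.2 hz),
      ofSubtype_apply_of_not_mem σ fun h => h.2 rfl]

open Classical in
noncomputable def stabilizerInfStabilizerMulEquiv (hz : z ∈ A) :
    ↥(stabilizer (Perm α) A ⊓ stabilizer (Perm α) z) ≃* Perm ↥(A \ {z}) × Perm ↥Aᶜ where
  toFun f :=
    (f.1.subtypePerm (apply_mem_diff_singleton_iff (apply_mem_iff_of_mem_stabilizer f.2.1) f.2.2),
      f.1.subtypePerm fun x => not_congr (apply_mem_iff_of_mem_stabilizer f.2.1 x))
  invFun στ := ⟨_, ofSubtype_mul_ofSubtype_mem_stabilizer_inf_stabilizer hz στ.1 στ.2⟩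
  left_inv f := Subtype.ext <| ofSubtype_subtypePerm_mul_ofSubtype_subtypePerm
    (disjoint_compl_right.mono_left Set.sdiff_subset)
    (apply_mem_diff_singleton_iff (apply_mem_iff_of_mem_stabilizer f.2.1) f.2.2)
    (fun x => not_congr (apply_mem_iff_of_mem_stabilizer f.2.1 x))
    fun x hx => (Set.mem_diff_singleton_union_compl_iff hz x).2 fun h => hx (h ▸ f.2.2)
  right_inv στ := Prod.ext
    (subtypePerm_ofSubtype_mul_ofSubtype_left
      (disjoint_compl_right.mono_left Set.sdiff_subset) _ _)
    (subtypePerm_ofSubtype_mul_ofSubtype_right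
      (disjoint_compl_right.mono_left Set.sdiff_subset) _ _)
  map_mul' _ _ := rfl

end Stabilizer

end Equiv.Perm

theorem isDimonoid_of_idempotent {D : Type*} {φ : D → D} {z : D} (hφ : ∀ x, φ (φ x) = φ x)
    (hz : φ z = z) : IsDimonoid (fun x _ => φ x) (fun _ _ => z) :=
  ⟨fun x _ _ => hφ x, fun _ _ _ => rfl, fun x _ _ => hφ x, fun _ _ _ => hz, fun _ _ _ => rfl⟩

namespace Set

variable {D : Type*} {A : Set D} {z x : D}

open Classical in
noncomputable def collapseCompl (A : Set D) (z x : D) : D := if x ∈ A then x else z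

theorem collapseCompl_of_mem (hx : x ∈ A) : A.collapseCompl z x = x := if_pos hx

theorem collapseCompl_of_notMem (hx : x ∉ A) : A.collapseCompl z x = z := if_neg hx

theorem collapseCompl_mem (hz : z ∈ A) (x : D) : A.collapseCompl z x ∈ A := by
  by_cases hx : x ∈ A
  · rwa [collapseCompl_of_mem hx]
  · rwa [collapseCompl_of_notMem hx]

theorem collapseCompl_collapseCompl (hz : z ∈ A) (x : D) :
    A.collapseCompl z (A.collapseCompl z x) = A.collapseCompl z x :=
  collapseCompl_of_mem (collapseCompl_mem hz x)

theorem mem_dimonoidAutGroup_collapseCompl_iff (hz : z ∈ A) (f : Perm D) :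
    f ∈ dimonoidAutGroup (fun x _ => A.collapseCompl z x) (fun _ _ => z) ↔
      ⇑f '' A = A ∧ f z = z := by
  constructor
  · rintro ⟨hcomm, hfz⟩
    have hcomm : ∀ x, f (A.collapseCompl z x) = A.collapseCompl z (f x) := fun x => hcomm x x
    have hfz : f z = z := hfz z z
    refine ⟨(f.image_eq_self_iff A).2 fun x => ⟨fun hfx => ?_, fun hx => ?_⟩, hfz⟩
    · by_contra hx
      have hfxz : f x = f z := by
        rw [← collapseCompl_of_mem hfx, ← hcomm, collapseCompl_of_notMem hx]
      exact hx (f.injective hfxz ▸ hz)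
    · rw [← collapseCompl_of_mem (z := z) hx, hcomm]
      exact collapseCompl_mem hz _
  · rintro ⟨hA, hfz⟩
    refine ⟨fun x _ => ?_, fun _ _ => hfz⟩
    change f (A.collapseCompl z x) = A.collapseCompl z (f x)
    have hfA := (f.image_eq_self_iff A).1 hA x
    by_cases hx : x ∈ A
    · rw [collapseCompl_of_mem hx, collapseCompl_of_mem (hfA.2 hx)]
    · rw [collapseCompl_of_notMem hx, collapseCompl_of_notMem (mt hfA.1 hx), hfz]

theorem dimonoidAutGroup_collapseCompl (hz : z ∈ A) :
    dimonoidAutGroup (fun x _ => A.collapseCompl z x) (fun _ _ => z) =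
      stabilizer (Perm D) A ⊓ stabilizer (Perm D) z :=
  SetLike.ext (mem_dimonoidAutGroup_collapseCompl_iff hz)

end Set

/-- The dimonoid `LO_{A←D} ⋈ O_D` for `0 ∈ A ⊆ D`: with `x ⊣ y = x` if `x ∈ A`,
`x ⊣ y = 0` if `x ∉ A`, and `x ⊢ y = 0`, one gets a rectangular dimonoid;
its automorphisms are exactly the bijections `f` with `f(A) = A` and `f(0) = 0`,
so its automorphism group is isomorphic to `S_{A∖{0}} × S_{D∖A}`; if `|D| > 2`
its halo is empty; and if `|A| > 1` it is nonabelian and noncommutative. -/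
theorem LO_A_D_null_dimonoid {D : Type*} (A : Set D) (z : D) (hz : z ∈ A)
    (ld rd : D → D → D)
    (hld1 : ∀ x y, x ∈ A → ld x y = x)
    (hld2 : ∀ x y, x ∉ A → ld x y = z)
    (hrd : ∀ x y, rd x y = z) :
    IsDimonoid ld rd ∧
    (∀ x y zz, ld (ld x y) zz = ld x zz) ∧
    (∀ x y zz, rd (rd x y) zz = rd x zz) ∧
    (∀ f : Equiv.Perm D,
      ((∀ x y, f (ld x y) = ld (f x) (f y)) ∧ (∀ x y, f (rd x y) = rd (f x) (f y))) ↔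
      (⇑f '' A = A ∧ f z = z)) ∧
    Nonempty (↥(dimonoidAutGroup ld rd) ≃* Equiv.Perm ↥(A \ {z}) × Equiv.Perm ↥Aᶜ) ∧
    ((∃ x y zz : D, x ≠ y ∧ y ≠ zz ∧ x ≠ zz) →
      ¬ ∃ e : D, ∀ d, rd e d = d ∧ ld d e = d) ∧
    (A.Nontrivial →
      (¬ ∀ x y, ld x y = rd y x) ∧
      ¬ ((∀ x y, ld x y = ld y x) ∧ (∀ x y, rd x y = rd y x))) := by
  obtain rfl : ld = fun x _ => A.collapseCompl z x := funext₂ fun x y => by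
    by_cases hx : x ∈ A
    · rw [hld1 x y hx, Set.collapseCompl_of_mem hx]
    · rw [hld2 x y hx, Set.collapseCompl_of_notMem hx]
  obtain rfl : rd = fun _ _ => z := funext₂ hrd
  refine ⟨isDimonoid_of_idempotent (Set.collapseCompl_collapseCompl hz)
      (Set.collapseCompl_of_mem hz),
    fun x _ _ => Set.collapseCompl_collapseCompl hz x, fun _ _ _ => rfl,
    Set.mem_dimonoidAutGroup_collapseCompl_iff hz,
    ⟨(MulEquiv.subgroupCongr (Set.dimonoidAutGroup_collapseCompl hz)).trans
      (Perm.stabilizerInfStabilizerMulEquiv hz)⟩, ?_, ?_⟩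
  · rintro ⟨x, y, -, hxy, -, -⟩ ⟨e, he⟩
    exact hxy ((he x).1.symm.trans (he y).1)
  · intro hA
    obtain ⟨c, hcA, hcz⟩ := hA.exists_ne z
    have hc : A.collapseCompl z c = c := Set.collapseCompl_of_mem hcA
    refine ⟨fun h => hcz (hc.symm.trans (h c c)), fun h => hcz ?_⟩
    exact hc.symm.trans ((h.1 c z).trans (Set.collapseCompl_of_mem hz))
end
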